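/- arXiv:1304.0896 — 2 statements merged into one kernel-verified Lean document; each statement's English description precedes it below -/
import Mathlib

section
/- Let α = 1/(k−2). Suppose Y₂ is a balanced graph of density k−2 and X₁*, X₂* are strictly balanced subgraphs of Y₂ with density k−2 such that X₁* ∩ X₂* is a nonempty proper subgraph of both X₁* and X₂*. Then the pair (X₁* ∪ X₂*, X₁*) is α-rigid, i.e., f_α(X₁* ∪ X₂*, S) < 0 for every S with X₁* ⊆ S ⊂ X₁* ∪ X₂*, and this contradicts ρ(Y₂) = k−2; hence two distinct strictly balanced subgraphs of density k−2 in a balanced graph of density k−2 cannot properly overlap. -/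
/-- A finite simple graph given by a finite vertex set and a finite edge set. -/
structure FGraph where
  verts : Finset ℕ
  edges : Finset (Sym2 ℕ)
  valid : ∀ e ∈ edges, ∀ x ∈ e, x ∈ verts
  loopless : ∀ e ∈ edges, ¬ e.IsDiag

namespace FGraph

def vcount (G : FGraph) : ℕ := G.verts.card

def ecount (G : FGraph) : ℕ := G.edges.card

/-- The density ρ(G) = e(G)/v(G). -/
def density (G : FGraph) : ℚ := (G.ecount : ℚ) / (G.vcount : ℚ)

/-- Subgraph relation. -/
def Subgraph (H G : FGraph) : Prop := H.verts ⊆ G.verts ∧ H.edges ⊆ G.edges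

/-- G is balanced if every nonempty subgraph has density at most ρ(G). -/
def Balanced (G : FGraph) : Prop :=
  ∀ H, Subgraph H G → H.verts.Nonempty → density H ≤ density G

/-- G is strictly balanced if every proper nonempty subgraph has density < ρ(G). -/
def StrictlyBalanced (G : FGraph) : Prop :=
  ∀ H, Subgraph H G → H.verts.Nonempty → H ≠ G → density H < density G

def union (G H : FGraph) : FGraph where
  verts := G.verts ∪ H.verts
  edges := G.edges ∪ H.edges
  valid := by
    intro e he x hx
    rcases Finset.mem_union.1 he with h | h
    · exact Finset.mem_union_left _ (G.valid e h x hx)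
    · exact Finset.mem_union_right _ (H.valid e h x hx)
  loopless := by
    intro e he
    rcases Finset.mem_union.1 he with h | h
    · exact G.loopless e h
    · exact H.loopless e h

def inter (G H : FGraph) : FGraph where
  verts := G.verts ∩ H.verts
  edges := G.edges ∩ H.edges
  valid := by
    intro e he x hx
    have h1 := Finset.mem_inter.1 he
    exact Finset.mem_inter.2 ⟨G.valid e h1.1 x hx, H.valid e h1.2 x hx⟩
  loopless := fun e he => G.loopless e (Finset.mem_inter.1 he).1

/-- Union of a finite family of graphs. -/
def iUnion {n : ℕ} (Y : Fin n → FGraph) : FGraph where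
  verts := Finset.univ.biUnion fun i => (Y i).verts
  edges := Finset.univ.biUnion fun i => (Y i).edges
  valid := by
    intro e he x hx
    rcases Finset.mem_biUnion.1 he with ⟨i, _, hi⟩
    exact Finset.mem_biUnion.2 ⟨i, Finset.mem_univ i, (Y i).valid e hi x hx⟩
  loopless := by
    intro e he
    rcases Finset.mem_biUnion.1 he with ⟨i, _, hi⟩
    exact (Y i).loopless e hi

/-- v(G,H), e(G,H) and f_α(G,H) = v(G,H) − α·e(G,H) for a pair of graphs. -/
def fpair (α : ℚ) (G H : FGraph) : ℚ :=
  ((G.verts \ H.verts).card : ℚ) - α * ((G.edges \ H.edges).card : ℚ)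

/-- f_α(G) = v(G) − α·e(G). -/
def fabs (α : ℚ) (G : FGraph) : ℚ := (G.vcount : ℚ) - α * (G.ecount : ℚ)

/-- Adjacency in G. -/
def Adj (G : FGraph) (x y : ℕ) : Prop := s(x, y) ∈ G.edges

/-- One step of an α-neutral chain: `K'` is obtained from `K` by attaching an α-neutral
extension over the subgraph `T` of `K`; every vertex of `T` has a neighbour among the new
vertices, no new edge joins a new vertex with a vertex of `K \ T`, the relative
`f_α` vanishes, and is positive for every strictly intermediate graph. -/
def NeutralStep (α : ℚ) (K' K T : FGraph) : Prop :=
  Subgraph K K' ∧ Subgraph T K ∧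
  (∀ x ∈ T.verts, ∃ y, y ∈ K'.verts ∧ y ∉ K.verts ∧ Adj K' x y) ∧
  (∀ e ∈ K'.edges, ∀ x ∈ e, ∀ y ∈ e,
      x ∈ K'.verts \ K.verts → y ∈ K.verts \ T.verts → False) ∧
  fpair α K' K = 0 ∧
  (∀ S, Subgraph K S → Subgraph S K' → S ≠ K → S ≠ K' → 0 < fpair α S K)

/-- (G,H) is an α-neutral chain. -/
def NeutralChain (α : ℚ) (G H : FGraph) : Prop :=
  ∃ (r : ℕ) (K T : ℕ → FGraph), K 0 = H ∧ K r = G ∧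
    ∀ i < r, NeutralStep α (K (i + 1)) (K i) (T i)

end FGraph


/-!
By inclusion–exclusion, `e(X₁ ∪ X₂) + e(X₁ ∩ X₂) = e(X₁) + e(X₂)` and likewise for `v`. So if `X₁`
and `X₂` have density at least `c` while their intersection has density below `c`, the union has
density above `c`. Strict balance of `X₁` puts the proper intersection below `k - 2`, so
`X₁ ∪ X₂ ⊆ Y₂` would be denser than `Y₂`.
-/

namespace FGraph

lemma inter_subgraph_left (G H : FGraph) : Subgraph (inter G H) G :=
  ⟨Finset.inter_subset_left, Finset.inter_subset_left⟩

lemma union_subgraph {G H K : FGraph} (hG : Subgraph G K) (hH : Subgraph H K) :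
    Subgraph (union G H) K :=
  ⟨Finset.union_subset hG.1 hH.1, Finset.union_subset hG.2 hH.2⟩

lemma vcount_union_add_vcount_inter (G H : FGraph) :
    (union G H).vcount + (inter G H).vcount = G.vcount + H.vcount :=
  Finset.card_union_add_card_inter _ _

lemma ecount_union_add_ecount_inter (G H : FGraph) :
    (union G H).ecount + (inter G H).ecount = G.ecount + H.ecount :=
  Finset.card_union_add_card_inter _ _

lemma vcount_pos {G : FGraph} (hG : G.verts.Nonempty) : (0 : ℚ) < G.vcount := by
  exact_mod_cast Finset.card_pos.2 hG

lemma le_density_iff {G : FGraph} (hG : G.verts.Nonempty) (c : ℚ) :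
    c ≤ density G ↔ c * G.vcount ≤ G.ecount :=
  le_div_iff₀ (vcount_pos hG)

lemma density_lt_iff {G : FGraph} (hG : G.verts.Nonempty) (c : ℚ) :
    density G < c ↔ (G.ecount : ℚ) < c * G.vcount :=
  div_lt_iff₀ (vcount_pos hG)

lemma lt_density_union {G H : FGraph} {c : ℚ} (hI : (inter G H).verts.Nonempty)
    (hG : c ≤ density G) (hH : c ≤ density H) (hGH : density (inter G H) < c) :
    c < density (union G H) := by
  have hU : (union G H).verts.Nonempty := hI.mono Finset.inter_subset_union
  have hGne : G.verts.Nonempty := hI.mono Finset.inter_subset_left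
  have hHne : H.verts.Nonempty := hI.mono Finset.inter_subset_right
  rw [le_density_iff hGne] at hG
  rw [le_density_iff hHne] at hH
  rw [density_lt_iff hI] at hGH
  rw [density, lt_div_iff₀ (vcount_pos hU)]
  have hv : ((union G H).vcount : ℚ) + (inter G H).vcount = G.vcount + H.vcount := by
    exact_mod_cast vcount_union_add_vcount_inter G H
  have he : ((union G H).ecount : ℚ) + (inter G H).ecount = G.ecount + H.ecount := by
    exact_mod_cast ecount_union_add_ecount_inter G H
  linear_combination hG + hH + hGH - he + c * hv

end FGraph

theorem stmt8_general (k : ℕ)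
    (Y₂ X₁ X₂ : FGraph)
    (hYb : FGraph.Balanced Y₂) (hYd : FGraph.density Y₂ = (k : ℚ) - 2)
    (hs1 : FGraph.Subgraph X₁ Y₂) (hs2 : FGraph.Subgraph X₂ Y₂)
    (hsb1 : FGraph.StrictlyBalanced X₁)
    (hd1 : FGraph.density X₁ = (k : ℚ) - 2) (hd2 : FGraph.density X₂ = (k : ℚ) - 2)
    (hne : ((FGraph.inter X₁ X₂).verts).Nonempty)
    (hp1 : FGraph.inter X₁ X₂ ≠ X₁) :
    False := by
  have hinter : FGraph.density (FGraph.inter X₁ X₂) < (k : ℚ) - 2 :=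
    hd1 ▸ hsb1 _ (FGraph.inter_subgraph_left X₁ X₂) hne hp1
  have hunion : (k : ℚ) - 2 < FGraph.density (FGraph.union X₁ X₂) :=
    FGraph.lt_density_union hne hd1.ge hd2.ge hinter
  have hbalanced : FGraph.density (FGraph.union X₁ X₂) ≤ (k : ℚ) - 2 :=
    hYd ▸ hYb _ (FGraph.union_subgraph hs1 hs2) (hne.mono Finset.inter_subset_union)
  exact (hunion.trans_le hbalanced).false

theorem stmt8 (k : ℕ) (hk : 4 ≤ k) (α : ℚ) (hα : α = 1 / ((k : ℚ) - 2))
    (Y₂ X₁ X₂ : FGraph)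
    (hYb : FGraph.Balanced Y₂) (hYd : FGraph.density Y₂ = (k : ℚ) - 2)
    (hs1 : FGraph.Subgraph X₁ Y₂) (hs2 : FGraph.Subgraph X₂ Y₂)
    (hsb1 : FGraph.StrictlyBalanced X₁) (hsb2 : FGraph.StrictlyBalanced X₂)
    (hd1 : FGraph.density X₁ = (k : ℚ) - 2) (hd2 : FGraph.density X₂ = (k : ℚ) - 2)
    (hne : ((FGraph.inter X₁ X₂).verts).Nonempty)
    (hp1 : FGraph.inter X₁ X₂ ≠ X₁) (hp2 : FGraph.inter X₁ X₂ ≠ X₂) :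
    False :=
  stmt8_general k Y₂ X₁ X₂ hYb hYd hs1 hs2 hsb1 hd1 hd2 hne hp1
end

section
/- Let k ≥ 4, α = 1/(k−2). Let G be a graph, A ⊆ G a subgraph, and suppose every subgraph W of G with v(W) < k³ has ρ(W) ≤ k−2. Suppose a subgraph X of G is built from a base of k−3 vertices by h successive steps, where step i adds v_i ≥ 1 new vertices and at least (k−2)v_i + 1 new edges, and v(X) < k³. Then h ≤ (k−3)(k−2). -/
theorem stmt16 (k h : ℕ) (hk : 4 ≤ k) (G : FGraph)
    (hdense : ∀ W : FGraph, FGraph.Subgraph W G → W.verts.card < k ^ 3 →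
      W.verts.Nonempty → FGraph.density W ≤ (k : ℚ) - 2)
    (X : ℕ → FGraph) (v : ℕ → ℕ)
    (hsub : ∀ i < h, FGraph.Subgraph (X i) (X (i + 1)))
    (hfinal : FGraph.Subgraph (X h) G)
    (hbase : (X 0).verts.card = k - 3)
    (hstep : ∀ i < h, 1 ≤ v i ∧ (X (i + 1)).verts.card = (X i).verts.card + v i ∧
      (X i).edges.card + (k - 2) * v i + 1 ≤ (X (i + 1)).edges.card)
    (hsize : (X h).verts.card < k ^ 3) :
    h ≤ (k - 3) * (k - 2) := by

  rcases Nat.eq_zero_or_pos h with h0 | hpos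
  · simp [h0]
  -- vertex count formula
  have hv : ∀ n ≤ h, (X n).verts.card = (k - 3) + ∑ i ∈ Finset.range n, v i := by
    intro n
    induction n with
    | zero => intro _; simpa using hbase
    | succ m ih =>
      intro hm
      have hmlt : m < h := hm
      have := (hstep m hmlt).2.1
      rw [this, ih (le_of_lt hmlt), Finset.sum_range_succ]
      ring
  -- edge count lower bound
  have he : ∀ n ≤ h, n + (k - 2) * ∑ i ∈ Finset.range n, v i ≤ (X n).edges.card := by
    intro n
    induction n with
    | zero => intro _; simp
    | succ m ih =>
      intro hm
      have hmlt : m < h := hm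
      have h1 := (hstep m hmlt).2.2
      have h2 := ih (le_of_lt hmlt)
      rw [Finset.sum_range_succ, Nat.mul_add]
      omega
  have hvh := hv h le_rfl
  have heh := he h le_rfl
  -- X h is nonempty
  have hS : 1 ≤ ∑ i ∈ Finset.range h, v i := by
    calc 1 ≤ v 0 := (hstep 0 hpos).1
    _ ≤ ∑ i ∈ Finset.range h, v i :=
      Finset.single_le_sum (f := v) (fun i _ => Nat.zero_le _) (Finset.mem_range.2 hpos)
  have hne : (X h).verts.Nonempty := by
    rw [← Finset.card_pos, hvh]; omega
  have hd := hdense (X h) hfinal hsize hne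
  have hvpos : (0 : ℚ) < ((X h).vcount : ℚ) := by
    have : 0 < (X h).verts.card := Finset.card_pos.2 hne
    exact_mod_cast this
  have hkc : ((k : ℚ) - 2) = ((k - 2 : ℕ) : ℚ) := by
    have : (2 : ℕ) ≤ k := by omega
    push_cast [Nat.cast_sub this]; ring
  have hE : (X h).ecount ≤ (k - 2) * (X h).vcount := by
    rw [FGraph.density, div_le_iff₀ hvpos, hkc] at hd
    exact_mod_cast hd
  simp only [FGraph.ecount, FGraph.vcount] at hE
  have key : h + (k - 2) * ∑ i ∈ Finset.range h, v i ≤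
      (k - 2) * (k - 3) + (k - 2) * ∑ i ∈ Finset.range h, v i := by
    calc h + (k - 2) * ∑ i ∈ Finset.range h, v i ≤ (X h).edges.card := heh
    _ ≤ (k - 2) * (X h).verts.card := hE
    _ = (k - 2) * (k - 3) + (k - 2) * ∑ i ∈ Finset.range h, v i := by
        rw [hvh, Nat.mul_add]
  have := Nat.le_of_add_le_add_right key
  exact le_of_le_of_eq this (Nat.mul_comm _ _)
end
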